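/- Let V ⊂ ℝ² be a finite point set that contains a Zeno configuration of size k (for some scale u > 0 and center x). Then every minimum spanning tree MST(V) of V satisfies I(MST(V)) ≥ k − 1; in fact, the point x_0 of V lying in the ball D_0 satisfies I(x_0, MST(V)) ≥ k − 1. -/

import Mathlib

open MeasureTheory Filter
open scoped Classical

noncomputable section

/-- Points in `d`-dimensional Euclidean space. -/
abbrev Pt (d : ℕ) : Type := EuclideanSpace ℝ (Fin d)

/-- The transmission radius of vertex `i` in the graph `G` on the points `x`:
the distance to its furthest neighbour (`0` if `i` is isolated). -/
noncomputable def rad {d n : ℕ} (x : Fin n → Pt d) (G : SimpleGraph (Fin n)) (i : Fin n) : ℝ :=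
  ((Finset.univ.filter fun j => G.Adj i j).sup fun j =>
    (⟨dist (x i) (x j), dist_nonneg⟩ : NNReal) : NNReal)

/-- The interference at a point `p` caused by the graph `G` on the points `x`:
the number of balls `B(x i, rad x G i)` containing `p`. -/
noncomputable def interAt {d n : ℕ} (x : Fin n → Pt d) (G : SimpleGraph (Fin n)) (p : Pt d) : ℕ :=
  (Finset.univ.filter fun i => dist p (x i) ≤ rad x G i).card

/-- The (maximum receiver-centric) interference of `G`:
the maximum interference at a vertex. -/
noncomputable def interG {d n : ℕ} (x : Fin n → Pt d) (G : SimpleGraph (Fin n)) : ℕ :=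
  Finset.univ.sup fun i => interAt x G (x i)

/-- Total Euclidean edge length of `G` on the points `x`. -/
noncomputable def tlen {d n : ℕ} (x : Fin n → Pt d) (G : SimpleGraph (Fin n)) : ℝ :=
  ∑ e ∈ G.edgeFinset, Sym2.lift ⟨fun i j => dist (x i) (x j), fun i j => dist_comm _ _⟩ e

/-- `G` is a minimum spanning tree of the points `x`: a connected graph on the
vertex set of minimum total Euclidean edge length. -/
def IsMST {d n : ℕ} (x : Fin n → Pt d) (G : SimpleGraph (Fin n)) : Prop :=
  G.Connected ∧ ∀ H : SimpleGraph (Fin n), H.Connected → tlen x G ≤ tlen x H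

/-- The center of the `i`-th small ball of a Zeno configuration with scale `u`
centered at `x`: the point `x + (u * 3 ^ i, 0)` for `i ≥ 1`, and `x` itself for `i = 0`. -/
noncomputable def zenoCenter (x : Pt 2) (u : ℝ) (i : ℕ) : Pt 2 :=
  if i = 0 then x else x + EuclideanSpace.single (0 : Fin 2) (u * 3 ^ i)

/-- The point family `p` contains a Zeno configuration of size `k` with scale `u > 0`
centered at `x`: there are `k` points, one in each closed ball `D i` of radius `u`
centered at `zenoCenter x u i`, and the big closed ball `D` of radius `u * 3 ^ k`
centered at `x` contains no other points of the family. -/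
def ContainsZeno {n : ℕ} (p : Fin n → Pt 2) (k : ℕ) (u : ℝ) (x : Pt 2) : Prop :=
  0 < u ∧ ∃ f : Fin k → Fin n, Function.Injective f ∧
    (∀ i : Fin k, dist (p (f i)) (zenoCenter x u (i : ℕ)) ≤ u) ∧
    (∀ j : Fin n, dist (p j) x ≤ u * 3 ^ k → ∃ i : Fin k, j = f i)


/-! An MST has the cut property: for any vertex set `S` and `a ∈ S`, `b ∉ S`, some MST edge
leaving `S` is no longer than `‖a - b‖`, since otherwise exchanging that edge for `ab` would
shorten the tree. In a Zeno configuration the distances grow geometrically. The cut `{x_0}`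
can therefore only be crossed cheaply by `x_0 x_1`, so `‖x_0 - x_1‖ ≤ r_1`. For
`2 ≤ i ≤ k - 2` the cut `{x_0, …, x_i}` can only be crossed cheaply by an edge at `x_i` of
length about `2 u 3^i`, which exceeds `‖x_0 - x_i‖ ≈ u 3^i`. Hence the balls `B_0, …, B_{k-2}`
all contain `x_0`. -/

section Graph
open SimpleGraph

lemma SimpleGraph.Connected.of_deleteEdges_le {V : Type*} {G H : SimpleGraph V}
    (hG : G.Connected) {v w : V} (hle : G.deleteEdges {s(v, w)} ≤ H) (hvw : H.Reachable v w) :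
    H.Connected := by
  have hadj : G.Adj ≤ Relation.ReflTransGen H.Adj := by
    intro a b hab
    rw [← reachable_iff_reflTransGen]
    by_cases he : s(a, b) = s(v, w)
    · rcases Sym2.eq_iff.mp he with ⟨rfl, rfl⟩ | ⟨rfl, rfl⟩
      exacts [hvw, hvw.symm]
    · exact (hle ((deleteEdges_adj ..).mpr ⟨hab, he⟩)).reachable
  refine (connected_iff _).mpr ⟨fun a b => ?_, hG.nonempty⟩
  rw [reachable_iff_reflTransGen]
  exact Relation.reflTransGen_closed hadj _ _ ((reachable_iff_reflTransGen _ _).mp (hG a b))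

lemma SimpleGraph.Walk.IsTrail.exists_adj_reachable_deleteEdges {V : Type*} {G : SimpleGraph V}
    (S : Set V) {a b : V} {W : G.Walk a b} (hW : W.IsTrail) (ha : a ∈ S) (hb : b ∉ S) :
    ∃ v ∈ S, ∃ w ∉ S, G.Adj v w ∧ (G.deleteEdges {s(v, w)}).Reachable a v ∧
      (G.deleteEdges {s(v, w)}).Reachable w b ∧ s(v, w) ∈ W.edges := by
  induction W with
  | nil => exact absurd ha hb
  | @cons a c b hac W ih =>
    obtain ⟨hW, hnotin⟩ := (Walk.isTrail_cons _ _).mp hW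
    by_cases hc : c ∈ S
    · obtain ⟨v, hv, w, hw, hvw, hav, hwb, hmem⟩ := ih hW hc hb
      have hac' : (G.deleteEdges {s(v, w)}).Adj a c :=
        (deleteEdges_adj ..).mpr ⟨hac, fun h => hnotin (Set.mem_singleton_iff.mp h ▸ hmem)⟩
      exact ⟨v, hv, w, hw, hvw, hac'.reachable.trans hav, hwb, List.mem_cons_of_mem _ hmem⟩
    · refine ⟨a, ha, c, hc, hac, .refl _, ⟨W.toDeleteEdges _ ?_⟩, List.mem_cons_self⟩
      rintro e he rfl
      exact hnotin he

end Graph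

section MST
open SimpleGraph
variable {d n : ℕ} {p : Fin n → Pt d} {G : SimpleGraph (Fin n)}

def edgeLength (p : Fin n → Pt d) : Sym2 (Fin n) → ℝ :=
  Sym2.lift ⟨fun i j => dist (p i) (p j), fun _ _ => dist_comm _ _⟩

lemma edgeLength_nonneg (e : Sym2 (Fin n)) : 0 ≤ edgeLength p e := by
  induction e using Sym2.ind with
  | _ i j => exact dist_nonneg (x := p i) (y := p j)

lemma tlen_eq_sum_edgeLength (p : Fin n → Pt d) (G : SimpleGraph (Fin n)) :
    tlen p G = ∑ e ∈ G.edgeFinset, edgeLength p e :=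
  rfl

lemma tlen_deleteEdges_sup_edge_le {v w : Fin n} (hvw : G.Adj v w) (a b : Fin n) :
    tlen p (G.deleteEdges {s(v, w)} ⊔ edge a b) ≤
      tlen p G - dist (p v) (p w) + dist (p a) (p b) := by
  calc tlen p (G.deleteEdges {s(v, w)} ⊔ edge a b)
      ≤ ∑ e ∈ insert s(a, b) (G.edgeFinset.erase s(v, w)), edgeLength p e := by
        refine Finset.sum_le_sum_of_subset_of_nonneg (fun e he => ?_)
          fun e _ _ => edgeLength_nonneg e
        simp only [mem_edgeFinset, edgeSet_sup, edgeSet_deleteEdges] at he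
        rcases he with ⟨he, hne⟩ | he
        · exact Finset.mem_insert_of_mem (Finset.mem_erase.mpr ⟨hne, mem_edgeFinset.mpr he⟩)
        · exact Finset.mem_insert.mpr (Or.inl (edgeSet_edge_subset he))
    _ ≤ edgeLength p s(a, b) + ∑ e ∈ G.edgeFinset.erase s(v, w), edgeLength p e := by
        by_cases hab : s(a, b) ∈ G.edgeFinset.erase s(v, w)
        · rw [Finset.insert_eq_of_mem hab]
          linarith [edgeLength_nonneg (p := p) s(a, b)]
        · rw [Finset.sum_insert hab]
    _ = tlen p G - dist (p v) (p w) + dist (p a) (p b) := by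
        rw [Finset.sum_erase_eq_sub (mem_edgeFinset.mpr hvw), ← tlen_eq_sum_edgeLength]
        simp only [edgeLength, Sym2.lift_mk]
        ring

lemma IsMST.dist_le_of_reachable_deleteEdges (hG : IsMST p G) {v w a b : Fin n}
    (hvw : G.Adj v w) (hav : (G.deleteEdges {s(v, w)}).Reachable a v)
    (hwb : (G.deleteEdges {s(v, w)}).Reachable w b) :
    dist (p v) (p w) ≤ dist (p a) (p b) := by
  have hle : G.deleteEdges {s(v, w)} ≤ G.deleteEdges {s(v, w)} ⊔ edge a b := le_sup_left
  have hab : (G.deleteEdges {s(v, w)} ⊔ edge a b).Reachable a b := by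
    rcases eq_or_ne a b with rfl | hab
    · rfl
    · exact (le_sup_right (a := G.deleteEdges {s(v, w)}) ((edge_adj ..).mpr
        ⟨Or.inl ⟨rfl, rfl⟩, hab⟩)).reachable
  have hconn := hG.1.of_deleteEdges_le hle
    ((hav.mono hle).symm.trans (hab.trans (hwb.mono hle).symm))
  linarith [hG.2 _ hconn, tlen_deleteEdges_sup_edge_le (p := p) hvw a b]

lemma IsMST.exists_adj_dist_le_of_mem_of_notMem (hG : IsMST p G) (S : Set (Fin n)) {a b : Fin n}
    (ha : a ∈ S) (hb : b ∉ S) :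
    ∃ v ∈ S, ∃ w ∉ S, G.Adj v w ∧ dist (p v) (p w) ≤ dist (p a) (p b) := by
  obtain ⟨W⟩ := hG.1.preconnected a b
  obtain ⟨v, hv, w, hw, hvw, hav, hwb, -⟩ :=
    W.bypass_isPath.isTrail.exists_adj_reachable_deleteEdges S ha hb
  exact ⟨v, hv, w, hw, hvw, hG.dist_le_of_reachable_deleteEdges hvw hav hwb⟩

end MST

section Interference
variable {d n : ℕ} {p : Fin n → Pt d} {G : SimpleGraph (Fin n)}

lemma dist_le_rad {i j : Fin n} (h : G.Adj i j) : dist (p i) (p j) ≤ rad p G i := by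
  have hj : j ∈ Finset.univ.filter fun j => G.Adj i j := by simp [h]
  exact_mod_cast Finset.le_sup (f := fun j => (⟨dist (p i) (p j), dist_nonneg⟩ : NNReal)) hj

lemma le_interAt_of_injective {m : ℕ} {q : Pt d} {g : Fin m → Fin n}
    (hg : Function.Injective g) (hcover : ∀ i, dist q (p (g i)) ≤ rad p G (g i)) :
    m ≤ interAt p G q := by
  simpa [interAt] using Finset.card_le_card_of_injOn (s := Finset.univ)
    (t := Finset.univ.filter fun j => dist q (p j) ≤ rad p G j) g
    (fun i _ => by simpa using hcover i) hg.injOn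

lemma interAt_le_interG (p : Fin n → Pt d) (G : SimpleGraph (Fin n)) (i : Fin n) :
    interAt p G (p i) ≤ interG p G :=
  Finset.le_sup (f := fun i => interAt p G (p i)) (Finset.mem_univ i)

end Interference

def zenoOffset (u : ℝ) (i : ℕ) : ℝ := if i = 0 then 0 else u * 3 ^ i

section ZenoOffset
variable {u : ℝ}

@[simp]
lemma zenoOffset_zero (u : ℝ) : zenoOffset u 0 = 0 := rfl

@[simp]
lemma zenoCenter_zero (x : Pt 2) (u : ℝ) : zenoCenter x u 0 = x := rfl

lemma zenoOffset_of_ne_zero (u : ℝ) {i : ℕ} (hi : i ≠ 0) : zenoOffset u i = u * 3 ^ i :=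
  if_neg hi

lemma zenoOffset_le (hu : 0 ≤ u) (i : ℕ) : zenoOffset u i ≤ u * 3 ^ i := by
  unfold zenoOffset
  split_ifs
  · positivity
  · rfl

lemma zenoOffset_mono (hu : 0 ≤ u) : Monotone (zenoOffset u) := by
  intro i j hij
  unfold zenoOffset
  split_ifs with hi hj hj
  · rfl
  · positivity
  · omega
  · exact mul_le_mul_of_nonneg_left (pow_le_pow_right₀ (by norm_num) hij) hu

lemma dist_zenoCenter (x : Pt 2) (u : ℝ) (i j : ℕ) :
    dist (zenoCenter x u i) (zenoCenter x u j) = |zenoOffset u i - zenoOffset u j| := by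
  have hc : ∀ i, zenoCenter x u i = x + EuclideanSpace.single 0 (zenoOffset u i) := by
    intro i
    unfold zenoCenter zenoOffset
    split_ifs <;> simp
  rw [hc, hc, dist_add_left, PiLp.dist_single_same, Real.dist_eq]

end ZenoOffset

section ZenoConfiguration
variable {n k : ℕ} {p : Fin n → Pt 2} {u : ℝ} {x : Pt 2} {f : Fin k → Fin n}
  {G : SimpleGraph (Fin n)}

lemma dist_le_zenoOffset_sub (hu : 0 ≤ u)
    (hin : ∀ i : Fin k, dist (p (f i)) (zenoCenter x u (i : ℕ)) ≤ u)
    {i j : Fin k} (hij : (i : ℕ) ≤ j) :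
    dist (p (f i)) (p (f j)) ≤ zenoOffset u j - zenoOffset u i + 2 * u := by
  have h := dist_triangle4 (p (f i)) (zenoCenter x u i) (zenoCenter x u j) (p (f j))
  rw [dist_zenoCenter, abs_sub_comm, abs_of_nonneg (sub_nonneg.mpr (zenoOffset_mono hu hij)),
    dist_comm (zenoCenter x u j)] at h
  linarith [hin i, hin j]

lemma zenoOffset_sub_le_dist (hin : ∀ i : Fin k, dist (p (f i)) (zenoCenter x u (i : ℕ)) ≤ u)
    (i j : Fin k) :
    zenoOffset u j - zenoOffset u i - 2 * u ≤ dist (p (f i)) (p (f j)) := by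
  have h := dist_triangle4 (zenoCenter x u i) (p (f i)) (p (f j)) (zenoCenter x u j)
  rw [dist_zenoCenter, abs_sub_comm, dist_comm (zenoCenter x u i)] at h
  linarith [hin i, hin j, le_abs_self (zenoOffset u j - zenoOffset u i)]

lemma dist_le_zenoOffset_add (hu : 0 ≤ u)
    (hin : ∀ i : Fin k, dist (p (f i)) (zenoCenter x u (i : ℕ)) ≤ u) (i : Fin k) :
    dist (p (f i)) x ≤ zenoOffset u i + u := by
  have h := dist_zenoCenter x u i 0
  rw [zenoOffset_zero, zenoCenter_zero, sub_zero,
    abs_of_nonneg (zenoOffset_mono hu (Nat.zero_le i))] at h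
  linarith [dist_triangle (p (f i)) (zenoCenter x u i) x, hin i]

/-- Either `w` is a configuration point `x_m` with `m > i`, or it lies outside `D`. -/
lemma sub_zenoOffset_le_dist_of_forall_lt (hu : 0 ≤ u)
    (hin : ∀ i : Fin k, dist (p (f i)) (zenoCenter x u (i : ℕ)) ≤ u)
    (hout : ∀ j : Fin n, dist (p j) x ≤ u * 3 ^ k → ∃ i : Fin k, j = f i)
    {i : ℕ} (hik : i < k) (j : Fin k) {w : Fin n} (hw : ∀ m : Fin k, f m = w → i < m) :
    u * 3 ^ (i + 1) - zenoOffset u j - 2 * u ≤ dist (p (f j)) (p w) := by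
  by_cases hwx : dist (p w) x ≤ u * 3 ^ k
  · obtain ⟨m, rfl⟩ := hout w hwx
    have hm := zenoOffset_mono hu (hw m rfl : i + 1 ≤ m)
    rw [zenoOffset_of_ne_zero u (Nat.add_one_ne_zero i)] at hm
    linarith [zenoOffset_sub_le_dist hin j m]
  · have h3k : u * 3 ^ (i + 1) ≤ u * 3 ^ k :=
      mul_le_mul_of_nonneg_left (pow_le_pow_right₀ (by norm_num) hik) hu
    linarith [dist_triangle (p w) (p (f j)) x, dist_comm (p w) (p (f j)),
      dist_le_zenoOffset_add hu hin j]

lemma IsMST.adj_zeno_zero_one (hG : IsMST p G) (hu : 0 < u) (hf : Function.Injective f)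
    (hin : ∀ i : Fin k, dist (p (f i)) (zenoCenter x u (i : ℕ)) ≤ u)
    (hout : ∀ j : Fin n, dist (p j) x ≤ u * 3 ^ k → ∃ i : Fin k, j = f i)
    (hk1 : 1 < k) : G.Adj (f ⟨0, Nat.zero_lt_of_lt hk1⟩) (f ⟨1, hk1⟩) := by
  have hk : 0 < k := Nat.zero_lt_of_lt hk1
  have h01 : f ⟨1, hk1⟩ ∉ ({f ⟨0, hk⟩} : Set (Fin n)) := fun h => by
    simpa using hf (Set.mem_singleton_iff.mp h)
  obtain ⟨v, rfl, w, hw, hvw, hlen⟩ :=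
    hG.exists_adj_dist_le_of_mem_of_notMem _ (Set.mem_singleton _) h01
  by_cases hw1 : w = f ⟨1, hk1⟩
  · exact hw1 ▸ hvw
  have hfar := sub_zenoOffset_le_dist_of_forall_lt hu.le hin hout hk1 ⟨0, hk⟩ (w := w)
    fun m hm => by
      have hm0 : (m : ℕ) ≠ 0 := fun h => hw (by rw [← hm, (Fin.ext h : m = ⟨0, hk⟩)]; rfl)
      have hm1 : (m : ℕ) ≠ 1 := fun h => hw1 (by rw [← hm, (Fin.ext h : m = ⟨1, hk1⟩)])
      omega
  have hnear := dist_le_zenoOffset_sub hu.le hin (i := ⟨0, hk⟩) (j := ⟨1, hk1⟩) zero_le_one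
  simp only [zenoOffset_zero, zenoOffset_of_ne_zero u one_ne_zero] at hfar hnear
  norm_num at hfar hnear
  linarith

/-- For `i ≥ 2` the cut separating the first `i + 1` points of the configuration from the rest is
crossed by an MST edge no longer than `‖x_i - x_{i+1}‖`; every such edge starts at `x_i`, and
it is longer than `‖x_0 - x_i‖`. -/
lemma IsMST.dist_zeno_zero_le_rad_of_two_le (hG : IsMST p G) (hu : 0 < u)
    (hf : Function.Injective f)
    (hin : ∀ i : Fin k, dist (p (f i)) (zenoCenter x u (i : ℕ)) ≤ u)
    (hout : ∀ j : Fin n, dist (p j) x ≤ u * 3 ^ k → ∃ i : Fin k, j = f i)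
    (hk : 0 < k) {i : Fin k} (hi : 2 ≤ (i : ℕ)) (hik : (i : ℕ) + 1 < k) :
    dist (p (f ⟨0, hk⟩)) (p (f i)) ≤ rad p G (f i) := by
  set S : Set (Fin n) := {v | ∃ j : Fin k, (j : ℕ) ≤ i ∧ f j = v}
  have hnext : f ⟨i + 1, hik⟩ ∉ S := by
    rintro ⟨j, hj, hji⟩
    have := congrArg Fin.val (hf hji)
    simp only at this
    omega
  obtain ⟨v, ⟨j, hji, rfl⟩, w, hw, hvw, hlen⟩ :=
    hG.exists_adj_dist_le_of_mem_of_notMem S ⟨i, le_rfl, rfl⟩ hnext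
  have hfar := sub_zenoOffset_le_dist_of_forall_lt hu.le hin hout i.isLt j (w := w)
    fun m hm => by
      by_contra h
      exact hw ⟨m, by omega, hm⟩
  have hstep := dist_le_zenoOffset_sub hu.le hin (i := i) (j := ⟨i + 1, hik⟩) (Nat.le_succ _)
  have hnear := dist_le_zenoOffset_sub hu.le hin (i := ⟨0, hk⟩) (j := i) (Nat.zero_le _)
  simp only [zenoOffset_zero, zenoOffset_of_ne_zero u (show (i : ℕ) ≠ 0 by omega),
    zenoOffset_of_ne_zero u (Nat.add_one_ne_zero i)] at hfar hstep hnear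
  have h3 : u * 3 ^ ((i : ℕ) + 1) = 3 * (u * 3 ^ (i : ℕ)) := by ring
  have h9 : 9 * u ≤ u * 3 ^ (i : ℕ) := by
    have : (3 : ℝ) ^ 2 ≤ 3 ^ (i : ℕ) := pow_le_pow_right₀ (by norm_num) hi
    nlinarith
  rcases hji.lt_or_eq with hji | hji
  · have hj : 3 * zenoOffset u j ≤ u * 3 ^ (i : ℕ) := calc
      3 * zenoOffset u j ≤ 3 * (u * 3 ^ (j : ℕ)) := by gcongr; exact zenoOffset_le hu.le j
      _ = u * 3 ^ ((j : ℕ) + 1) := by ring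
      _ ≤ u * 3 ^ (i : ℕ) := by gcongr; norm_num; omega
    linarith
  · obtain rfl := Fin.ext hji
    rw [zenoOffset_of_ne_zero u (show (j : ℕ) ≠ 0 by omega)] at hfar
    linarith [dist_le_rad (p := p) hvw]

lemma IsMST.dist_zeno_zero_le_rad (hG : IsMST p G) (hu : 0 < u) (hf : Function.Injective f)
    (hin : ∀ i : Fin k, dist (p (f i)) (zenoCenter x u (i : ℕ)) ≤ u)
    (hout : ∀ j : Fin n, dist (p j) x ≤ u * 3 ^ k → ∃ i : Fin k, j = f i)
    (hk : 0 < k) (i : Fin k) (hik : (i : ℕ) + 1 < k) :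
    dist (p (f ⟨0, hk⟩)) (p (f i)) ≤ rad p G (f i) := by
  rcases Nat.lt_or_ge (i : ℕ) 2 with hi | hi
  · interval_cases hi0 : (i : ℕ)
    · rw [show i = ⟨0, hk⟩ from Fin.ext hi0, dist_self]
      exact NNReal.coe_nonneg _
    · rw [show i = ⟨1, by omega⟩ from Fin.ext hi0, dist_comm]
      exact dist_le_rad (hG.adj_zeno_zero_one hu hf hin hout _).symm
  · exact hG.dist_zeno_zero_le_rad_of_two_le hu hf hin hout hk hi hik

end ZenoConfiguration

theorem zeno_mst_interference_general (n k : ℕ) (hk : 0 < k) (p : Fin n → Pt 2)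
    (u : ℝ) (hu : 0 < u) (x : Pt 2)
    (f : Fin k → Fin n) (hf : Function.Injective f)
    (hin : ∀ i : Fin k, dist (p (f i)) (zenoCenter x u (i : ℕ)) ≤ u)
    (hout : ∀ j : Fin n, dist (p j) x ≤ u * 3 ^ k → ∃ i : Fin k, j = f i)
    (G : SimpleGraph (Fin n)) (hG : IsMST p G) :
    k - 1 ≤ interAt p G (p (f ⟨0, hk⟩)) ∧ k - 1 ≤ interG p G := by
  have hx₀ : k - 1 ≤ interAt p G (p (f ⟨0, hk⟩)) :=
    le_interAt_of_injective (g := fun i : Fin (k - 1) => f (Fin.castLE (Nat.sub_le k 1) i))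
      (hf.comp (Fin.castLE_injective _)) fun i =>
        hG.dist_zeno_zero_le_rad hu hf hin hout hk _ (by simp only [Fin.val_castLE]; omega)
  exact ⟨hx₀, hx₀.trans (interAt_le_interG p G _)⟩

/-- If a point set in `ℝ²` contains a Zeno configuration of size `k`, then every
minimum spanning tree has interference at least `k - 1`; in fact the point `x₀`
lying in the ball `D₀` already receives interference at least `k - 1`. -/
theorem zeno_mst_interference (n k : ℕ) (hk : 0 < k) (p : Fin n → Pt 2)
    (hp : Function.Injective p) (u : ℝ) (hu : 0 < u) (x : Pt 2)
    (f : Fin k → Fin n) (hf : Function.Injective f)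
    (hin : ∀ i : Fin k, dist (p (f i)) (zenoCenter x u (i : ℕ)) ≤ u)
    (hout : ∀ j : Fin n, dist (p j) x ≤ u * 3 ^ k → ∃ i : Fin k, j = f i)
    (G : SimpleGraph (Fin n)) (hG : IsMST p G) :
    k - 1 ≤ interAt p G (p (f ⟨0, hk⟩)) ∧ k - 1 ≤ interG p G :=
  zeno_mst_interference_general n k hk p u hu x f hf hin hout G hG
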